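/- Let r₁ ≤ r₂ and let A ∈ B^{r₁,s₁} satisfy ε_j(A) = 0 for all j ≠ r₂. Then a_{p,q} = 0 for all (p,q) outside the antidiagonal set {(r₁, r₂), (r₁-1, r₂+1), …, (r₁-k, r₂+k)} where k = min(r₁-1, n-r₂), and a_{r₁-k, r₂+k} ≤ a_{r₁-k+1, r₂+k-1} ≤ ⋯ ≤ a_{r₁, r₂}. -/

import Mathlib

open Finset

/-- Matrices of the polytope model: entry `a p q` for row `p`, column `q`. -/
abbrev Mat := ℕ → ℕ → ℕ

/-- A monotone lattice path `β(1) = (1,i), …, β(n) = (i,n)`: each step increases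
the row or the column index by 1. -/
def IsPath (n i : ℕ) (β : ℕ → ℕ × ℕ) : Prop :=
  β 1 = (1, i) ∧ β n = (i, n) ∧
    ∀ s, 1 ≤ s → s < n →
      β (s + 1) = ((β s).1 + 1, (β s).2) ∨ β (s + 1) = ((β s).1, (β s).2 + 1)

/-- Membership in the Kirillov–Reshetikhin polytope `B^{i,m}` of type `A_n^{(1)}`:
non-negative integer matrices indexed by `1 ≤ p ≤ i`, `i ≤ q ≤ n` (zero outside),
all of whose monotone lattice-path sums are at most `m`. -/
def MemKR (n i m : ℕ) (a : Mat) : Prop :=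
  (∀ p q, ¬(1 ≤ p ∧ p ≤ i ∧ i ≤ q ∧ q ≤ n) → a p q = 0) ∧
  ∀ β : ℕ → ℕ × ℕ, IsPath n i β → ∑ s ∈ Icc 1 n, a (β s).1 (β s).2 ≤ m

/-- The set of maximizers of `F` on `S`. -/
def maximizers (S : Finset ℕ) (F : ℕ → ℕ) : Finset ℕ :=
  S.filter fun q => ∀ q' ∈ S, F q' ≤ F q

/-- Smallest maximizer. -/
def argmaxLow (S : Finset ℕ) (F : ℕ → ℕ) : ℕ := WithTop.untopD 0 (maximizers S F).min

/-- Largest maximizer. -/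
def argmaxHigh (S : Finset ℕ) (F : ℕ → ℕ) : ℕ := WithBot.unbotD 0 (maximizers S F).max

/-- For `l > i`: `G(q) = Σ_{j=1}^q a_{j,l-1} + Σ_{j=q}^i a_{j,l}`. -/
def Gplus (i : ℕ) (a : Mat) (l q : ℕ) : ℕ :=
  ∑ j ∈ Icc 1 q, a j (l - 1) + ∑ j ∈ Icc q i, a j l

/-- For `l < i`: `F(q) = Σ_{j=i}^q a_{l,j} + Σ_{j=q}^n a_{l+1,j}`. -/
def Fminus (n i : ℕ) (a : Mat) (l q : ℕ) : ℕ :=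
  ∑ j ∈ Icc i q, a l j + ∑ j ∈ Icc q n, a (l + 1) j

def pPlus (i : ℕ) (a : Mat) (l : ℕ) : ℕ := argmaxLow (Icc 1 i) (Gplus i a l)
def qPlus (i : ℕ) (a : Mat) (l : ℕ) : ℕ := argmaxHigh (Icc 1 i) (Gplus i a l)
def pMinus (n i : ℕ) (a : Mat) (l : ℕ) : ℕ := argmaxHigh (Icc i n) (Fminus n i a l)
def qMinus (n i : ℕ) (a : Mat) (l : ℕ) : ℕ := argmaxLow (Icc i n) (Fminus n i a l)

/-- The statistic `φ_l` of the polytope model (`l = 0` is the affine one). -/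
def phi (n i m : ℕ) (a : Mat) (l : ℕ) : ℤ :=
  if l = 0 then (a 1 n : ℤ)
  else if l = i then
    (m : ℤ) - ∑ j ∈ Icc 1 (i - 1), (a j i : ℤ) - ∑ j ∈ Icc i n, (a i j : ℤ)
  else if i < l then
    ∑ j ∈ Icc 1 (pPlus i a l), (a j (l - 1) : ℤ)
      - ∑ j ∈ Icc 1 (pPlus i a l - 1), (a j l : ℤ)
  else
    ∑ j ∈ Icc (pMinus n i a l) n, (a (l + 1) j : ℤ)
      - ∑ j ∈ Icc (pMinus n i a l + 1) n, (a l j : ℤ)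

/-- The statistic `ε_l` of the polytope model (`l = 0` is the affine one). -/
def eps (n i m : ℕ) (a : Mat) (l : ℕ) : ℤ :=
  if l = 0 then
    (m : ℤ) - ∑ j ∈ Icc i n, (a 1 j : ℤ) - ∑ j ∈ Icc 2 n, (a j n : ℤ)
  else if l = i then (a i i : ℤ)
  else if i < l then
    ∑ j ∈ Icc (qPlus i a l) i, (a j l : ℤ)
      - ∑ j ∈ Icc (qPlus i a l + 1) i, (a j (l - 1) : ℤ)
  else
    ∑ j ∈ Icc i (qMinus n i a l), (a l j : ℤ)
      - ∑ j ∈ Icc i (qMinus n i a l - 1), (a (l + 1) j : ℤ)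

/-- Update one entry of a matrix. -/
def upd (a : Mat) (p q v : ℕ) : Mat :=
  fun p' q' => if p' = p ∧ q' = q then v else a p' q'

/-- The Kashiwara raising operator `ẽ_l` on `B^{i,m}` (`l = 0` affine). -/
def eOp (n i m : ℕ) (a : Mat) (l : ℕ) : Option Mat :=
  if eps n i m a l ≤ 0 then none
  else some (
    if l = 0 then upd a 1 n (a 1 n + 1)
    else if l = i then upd a i i (a i i - 1)
    else if i < l then
      upd (upd a (qPlus i a l) (l - 1) (a (qPlus i a l) (l - 1) + 1))
        (qPlus i a l) l (a (qPlus i a l) l - 1)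
    else
      upd (upd a l (qMinus n i a l) (a l (qMinus n i a l) - 1))
        (l + 1) (qMinus n i a l) (a (l + 1) (qMinus n i a l) + 1))

/-- The Kashiwara lowering operator `f̃_l` on `B^{i,m}` (`l = 0` affine). -/
def fOp (n i m : ℕ) (a : Mat) (l : ℕ) : Option Mat :=
  if phi n i m a l ≤ 0 then none
  else some (
    if l = 0 then upd a 1 n (a 1 n - 1)
    else if l = i then upd a i i (a i i + 1)
    else if i < l then
      upd (upd a (pPlus i a l) (l - 1) (a (pPlus i a l) (l - 1) - 1))
        (pPlus i a l) l (a (pPlus i a l) l + 1)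
    else
      upd (upd a l (pMinus n i a l) (a l (pMinus n i a l) + 1))
        (l + 1) (pMinus n i a l) (a (l + 1) (pMinus n i a l) - 1))

/-- `ẽ_l` on the tensor product `B^{r₁,s₁} ⊗ B^{r₂,s₂}`. -/
def eTen (n r₁ s₁ r₂ s₂ l : ℕ) (x : Mat × Mat) : Option (Mat × Mat) :=
  if phi n r₂ s₂ x.2 l < eps n r₁ s₁ x.1 l then
    (eOp n r₁ s₁ x.1 l).map fun a' => (a', x.2)
  else (eOp n r₂ s₂ x.2 l).map fun b' => (x.1, b')

/-- `f̃_l` on the tensor product `B^{r₁,s₁} ⊗ B^{r₂,s₂}`. -/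
def fTen (n r₁ s₁ r₂ s₂ l : ℕ) (x : Mat × Mat) : Option (Mat × Mat) :=
  if phi n r₂ s₂ x.2 l ≤ eps n r₁ s₁ x.1 l then
    (fOp n r₁ s₁ x.1 l).map fun a' => (a', x.2)
  else (fOp n r₂ s₂ x.2 l).map fun b' => (x.1, b')

/-- Classical highest weight element of the tensor product. -/
def IsHW (n r₁ s₁ r₂ s₂ : ℕ) (x : Mat × Mat) : Prop :=
  ∀ l, 1 ≤ l → l ≤ n → eTen n r₁ s₁ r₂ s₂ l x = none

/-- Cartan matrix of type `A_n`: `⟨α_r, α_j^∨⟩`. -/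
def cartan (r j : ℕ) : ℤ :=
  if r = j then 2 else if r + 1 = j ∨ j + 1 = r then -1 else 0

/-- The pairing `⟨wt(A), α_j^∨⟩` where `wt(A) = m ω_i - Σ a_{p,q} α_{p,q}`,
and `α_{p,q} = α_p + ⋯ + α_q`. -/
def wtCoord (n i m : ℕ) (a : Mat) (j : ℕ) : ℤ :=
  (if j = i then (m : ℤ) else 0)
    - ∑ p ∈ Icc 1 i, ∑ q ∈ Icc i n, (a p q : ℤ) * ∑ r ∈ Icc p q, cartan r j

/-- The matrix `b^Λ` with `(p,q)`-entry `c ((p+q) mod (n+1))` on the index range. -/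
def bOf (n i : ℕ) (c : ℕ → ℕ) : Mat :=
  fun p q => if 1 ≤ p ∧ p ≤ i ∧ i ≤ q ∧ q ≤ n then c ((p + q) % (n + 1)) else 0

/-!
For `l > r₁`, `ε_l(A) = 0` means that `G(q) = Σ_{j ≤ q} a_{j,l-1} + Σ_{j ≥ q} a_{j,l}` never
exceeds the full sum of column `l - 1`, i.e. each tail `Σ_{j ≥ q} a_{j,l}` is bounded by
`Σ_{j > q} a_{j,l-1}`; dually, for `l < r₁` each initial segment `Σ_{j ≤ q} a_{l,j}` is bounded
by `Σ_{j < q} a_{l+1,j}`. Row `r₁` vanishes left of column `r₂` (at `l = r₁` because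
`ε_{r₁}(A) = a_{r₁,r₁}`, elsewhere by the tail bound with `q = r₁`), and the row bounds carry
these zeros up to every entry below the antidiagonal `p + q = r₁ + r₂`; the column bounds,
applied from column `r₁` rightwards, kill every entry above it. On the antidiagonal the row
bound then reads `a_{p,q} ≤ a_{p+1,q-1}`.
-/

lemma sum_Icc_add_sum_Icc_succ {M : Type*} [AddCommMonoid M] (f : ℕ → M) {a m b : ℕ}
    (ha : a ≤ m + 1) (hb : m ≤ b) :
    ∑ j ∈ Icc a m, f j + ∑ j ∈ Icc (m + 1) b, f j = ∑ j ∈ Icc a b, f j := by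
  rw [← sum_union (disjoint_left.2 fun x hx hx' => by simp only [mem_Icc] at hx hx'; omega)]
  congr 1
  ext x
  simp only [mem_union, mem_Icc]
  omega

lemma mem_maximizers {S : Finset ℕ} {F : ℕ → ℕ} {q : ℕ} :
    q ∈ maximizers S F ↔ q ∈ S ∧ ∀ q' ∈ S, F q' ≤ F q :=
  mem_filter

lemma maximizers_nonempty {S : Finset ℕ} (F : ℕ → ℕ) (hS : S.Nonempty) :
    (maximizers S F).Nonempty :=
  let ⟨q, hq, hmax⟩ := S.exists_max_image F hS
  ⟨q, mem_maximizers.2 ⟨hq, hmax⟩⟩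

lemma argmaxHigh_mem_maximizers {S : Finset ℕ} (F : ℕ → ℕ) (hS : S.Nonempty) :
    argmaxHigh S F ∈ maximizers S F := by
  have hne := maximizers_nonempty F hS
  rw [argmaxHigh, ← coe_max' hne, WithBot.unbotD_coe]
  exact max'_mem _ hne

lemma argmaxLow_mem_maximizers {S : Finset ℕ} (F : ℕ → ℕ) (hS : S.Nonempty) :
    argmaxLow S F ∈ maximizers S F := by
  have hne := maximizers_nonempty F hS
  rw [argmaxLow, ← coe_min' hne, WithTop.untopD_coe]
  exact min'_mem _ hne

section Statistics

variable {n i m : ℕ} {a : Mat} {l : ℕ}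

lemma eps_self (hi : i ≠ 0) : eps n i m a i = a i i := by
  simp [eps, hi]

lemma eps_of_lt (hl : i < l) :
    eps n i m a l = ∑ j ∈ Icc (qPlus i a l) i, (a j l : ℤ)
      - ∑ j ∈ Icc (qPlus i a l + 1) i, (a j (l - 1) : ℤ) := by
  simp [eps, hl, hl.ne', Nat.ne_zero_of_lt hl]

lemma eps_of_pos_of_lt (hl0 : l ≠ 0) (hl : l < i) :
    eps n i m a l = ∑ j ∈ Icc i (qMinus n i a l), (a l j : ℤ)
      - ∑ j ∈ Icc i (qMinus n i a l - 1), (a (l + 1) j : ℤ) := by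
  simp [eps, hl0, hl.ne, hl.not_gt]

lemma sum_Icc_col_le_of_eps_eq_zero (hi : 1 ≤ i) (hl : i < l) (h : eps n i m a l = 0)
    {q : ℕ} (hq : 1 ≤ q) (hqi : q ≤ i) :
    ∑ j ∈ Icc q i, a j l ≤ ∑ j ∈ Icc (q + 1) i, a j (l - 1) := by
  obtain ⟨hQ, hQmax⟩ := mem_maximizers.1 <|
    argmaxHigh_mem_maximizers (Gplus i a l) (nonempty_Icc.2 hi)
  have hG := hQmax q (mem_Icc.2 ⟨hq, hqi⟩)
  change qPlus i a l ∈ _ at hQ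
  change _ ≤ Gplus i a l (qPlus i a l) at hG
  rw [eps_of_lt hl, sub_eq_zero] at h
  rw [mem_Icc] at hQ
  have hsplitQ := sum_Icc_add_sum_Icc_succ (a · (l - 1)) le_add_self hQ.2
  have hsplitq := sum_Icc_add_sum_Icc_succ (a · (l - 1)) le_add_self hqi
  unfold Gplus at hG
  zify at hG hsplitQ hsplitq ⊢
  linarith

lemma sum_Icc_row_le_of_eps_eq_zero (hl0 : 1 ≤ l) (hl : l < i) (hin : i ≤ n)
    (h : eps n i m a l = 0) {q : ℕ} (hiq : i ≤ q) (hqn : q ≤ n) :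
    ∑ j ∈ Icc i q, a l j ≤ ∑ j ∈ Icc i (q - 1), a (l + 1) j := by
  obtain ⟨hQ, hQmax⟩ := mem_maximizers.1 <|
    argmaxLow_mem_maximizers (Fminus n i a l) (nonempty_Icc.2 hin)
  have hF := hQmax q (mem_Icc.2 ⟨hiq, hqn⟩)
  change qMinus n i a l ∈ _ at hQ
  change _ ≤ Fminus n i a l (qMinus n i a l) at hF
  rw [eps_of_pos_of_lt (by omega) hl, sub_eq_zero] at h
  rw [mem_Icc] at hQ
  have hsplitQ := sum_Icc_add_sum_Icc_succ (a (l + 1)) (a := i) (m := qMinus n i a l - 1)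
    (b := n) (by omega) (by omega)
  have hsplitq := sum_Icc_add_sum_Icc_succ (a (l + 1)) (a := i) (m := q - 1)
    (b := n) (by omega) (by omega)
  rw [Nat.sub_add_cancel (by omega)] at hsplitQ hsplitq
  unfold Fminus at hF
  zify at hF hsplitQ hsplitq ⊢
  linarith

lemma apply_self_of_eps_eq_zero (hi : 1 ≤ i) (hil : i ≤ l) (h : eps n i m a l = 0) :
    a i l = 0 := by
  rcases hil.eq_or_lt with rfl | hil
  · rw [eps_self (by omega)] at h
    exact_mod_cast h
  · simpa using sum_Icc_col_le_of_eps_eq_zero hi hil h hi le_rfl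

end Statistics

section Antidiagonal

variable {n r₁ s₁ r₂ : ℕ} {A : Mat}

lemma sum_Icc_row_eq_zero_of_add_lt (h12 : r₁ ≤ r₂) (h2n : r₂ ≤ n)
    (heps : ∀ j, 1 ≤ j → j ≤ n → j ≠ r₂ → eps n r₁ s₁ A j = 0)
    {p : ℕ} (hp : 1 ≤ p) (hpr : p ≤ r₁) {q : ℕ} (hqn : q ≤ n) (hpq : p + q < r₁ + r₂) :
    ∑ j ∈ Icc r₁ q, A p j = 0 := by
  induction hpr using Nat.decreasingInduction generalizing q with
  | self =>
    refine sum_eq_zero fun j hj => ?_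
    rw [mem_Icc] at hj
    exact apply_self_of_eps_eq_zero hp hj.1 (heps j (by omega) (by omega) (by omega))
  | of_succ k hk ih =>
    rcases lt_or_ge q r₁ with hq | hq
    · exact sum_eq_zero fun j hj => absurd (mem_Icc.1 hj) (by omega)
    · have hrow := sum_Icc_row_le_of_eps_eq_zero hp hk (h12.trans h2n)
        (heps k hp (by omega) (by omega)) hq hqn
      rw [ih (by omega) (q := q - 1) (by omega) (by omega)] at hrow
      omega

lemma sum_Icc_col_eq_zero_of_lt_add (h1 : 1 ≤ r₁) (h12 : r₁ ≤ r₂)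
    (heps : ∀ j, 1 ≤ j → j ≤ n → j ≠ r₂ → eps n r₁ s₁ A j = 0)
    {l : ℕ} (hl : r₁ ≤ l) (hln : l ≤ n) {q : ℕ} (hq : 1 ≤ q) (hql : r₁ + r₂ < q + l) :
    ∑ j ∈ Icc q r₁, A j l = 0 := by
  induction l, hl using Nat.le_induction generalizing q with
  | base => exact sum_eq_zero fun j hj => absurd (mem_Icc.1 hj) (by omega)
  | succ l hl ih =>
    rcases lt_or_ge r₁ q with hqr | hqr
    · exact sum_eq_zero fun j hj => absurd (mem_Icc.1 hj) (by omega)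
    · have hcol := sum_Icc_col_le_of_eps_eq_zero h1 (by omega)
        (heps (l + 1) (by omega) hln (by omega)) hq hqr
      rw [Nat.add_sub_cancel, ih (by omega) (by omega) (by omega)] at hcol
      omega

lemma eq_zero_of_add_ne (h1 : 1 ≤ r₁) (h12 : r₁ ≤ r₂) (h2n : r₂ ≤ n) (hA : MemKR n r₁ s₁ A)
    (heps : ∀ j, 1 ≤ j → j ≤ n → j ≠ r₂ → eps n r₁ s₁ A j = 0)
    {p q : ℕ} (hpq : p + q ≠ r₁ + r₂) : A p q = 0 := by
  by_cases hpq' : 1 ≤ p ∧ p ≤ r₁ ∧ r₁ ≤ q ∧ q ≤ n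
  · obtain ⟨hp, hpr, hrq, hqn⟩ := hpq'
    rcases hpq.lt_or_gt with hlt | hgt
    · exact sum_eq_zero_iff.1 (sum_Icc_row_eq_zero_of_add_lt h12 h2n heps hp hpr hqn hlt) q
        (mem_Icc.2 ⟨hrq, le_rfl⟩)
    · exact sum_eq_zero_iff.1 (sum_Icc_col_eq_zero_of_lt_add h1 h12 heps hrq hqn hp hgt) p
        (mem_Icc.2 ⟨le_rfl, hpr⟩)
  · exact hA.1 p q hpq'

end Antidiagonal

/-- if `ε_j(A) = 0` for all `j ≠ r₂` then `A` is supported on the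
antidiagonal `{(r₁-j, r₂+j) : 0 ≤ j ≤ k}` with weakly increasing entries
towards `(r₁, r₂)`. -/
theorem stmt10 (n r₁ s₁ r₂ : ℕ) (h1 : 1 ≤ r₁) (h12 : r₁ ≤ r₂) (h2n : r₂ ≤ n)
    (A : Mat) (hA : MemKR n r₁ s₁ A)
    (heps : ∀ j, 1 ≤ j → j ≤ n → j ≠ r₂ → eps n r₁ s₁ A j = 0) :
    (∀ p q, p + q ≠ r₁ + r₂ → A p q = 0) ∧
    (∀ j, j + 1 ≤ min (r₁ - 1) (n - r₂) →
      A (r₁ - (j + 1)) (r₂ + (j + 1)) ≤ A (r₁ - j) (r₂ + j)) := by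
  have hsupp : ∀ p q, p + q ≠ r₁ + r₂ → A p q = 0 :=
    fun _ _ => eq_zero_of_add_ne h1 h12 h2n hA heps
  refine ⟨hsupp, fun j hj => ?_⟩
  rw [Nat.le_min] at hj
  have hrow := sum_Icc_row_le_of_eps_eq_zero (l := r₁ - (j + 1)) (q := r₂ + (j + 1))
    (by omega) (by omega) (h12.trans h2n) (heps _ (by omega) (by omega) (by omega))
    (by omega) (by omega)
  rw [show r₂ + (j + 1) - 1 = r₂ + j by omega, show r₁ - (j + 1) + 1 = r₁ - j by omega,
    sum_eq_single_of_mem (r₂ + j) (mem_Icc.2 ⟨by omega, le_rfl⟩)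
      fun k _ hk => hsupp _ _ (by omega)] at hrow
  exact (single_le_sum (fun _ _ => Nat.zero_le _) (mem_Icc.2 ⟨by omega, le_rfl⟩)).trans hrow
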